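/- arXiv:1606.07522 — 2 statements merged into one kernel-verified Lean document; each statement's English description precedes it below -/
import Mathlib

section
/- CP existential implies NC existential: if there exists a ⊴_w^Γ-minimal φ-world satisfying ψ under strict agreement semantics (i.e., w satisfies ⟨φ,Γ⟩ψ under CP), then w satisfies ⟨φ,Γ⟩ψ under NC semantics; equivalently, w ∈ ⟦[φ,Γ]ψ⟧_NC implies w ∈ ⟦[φ,Γ]ψ⟧_CP. -/
open Set

/-- Minimal elements of `S` within domain `D` w.r.t. the strict part of `r`. -/
def condMinOn {W : Type*} (r : W → W → Prop) (D S : Set W) : Set W :=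
  {v | v ∈ S ∩ D ∧ ∀ u ∈ S ∩ D, ¬ (r u v ∧ ¬ r v u)}

/-- The set of formulas in `Γ` on whose truth `u` agrees with `w`. -/
def agreeSet {W F : Type*} (sat : W → F → Prop) (Γ : Set F) (w u : W) : Set F :=
  {γ ∈ Γ | (sat u γ ↔ sat w γ)}

/-- `[w]_Γ`: worlds of `Ww` agreeing with `w` on every formula of `Γ`. -/
def cpCls {W F : Type*} (sat : W → F → Prop) (Γ : Set F) (Ww : Set W) (w : W) : Set W :=
  {u ∈ Ww | ∀ γ ∈ Γ, (sat u γ ↔ sat w γ)}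

/-- `⊴_w^Γ`: the restriction of `pre` to `[w]_Γ`. -/
def cpRel {W F : Type*} (sat : W → F → Prop) (Γ : Set F) (Ww : Set W)
    (pre : W → W → Prop) (w : W) (u v : W) : Prop :=
  u ∈ cpCls sat Γ Ww w ∧ v ∈ cpCls sat Γ Ww w ∧ pre u v

/-- The restriction of a relation `pre` to a subset `A`. -/
def restrictRel {W : Type*} (A : Set W) (pre : W → W → Prop) (u v : W) : Prop :=
  u ∈ A ∧ v ∈ A ∧ pre u v

/-- `⪯_w^Γ`: the naive-counting relation. -/
def ncRel {W F : Type*} (sat : W → F → Prop) (Γ : Finset F)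
    (pre : W → W → Prop) (w : W) (u v : W) : Prop :=
  (agreeSet sat (↑Γ) w u).ncard > (agreeSet sat (↑Γ) w v).ncard ∨
    ((agreeSet sat (↑Γ) w u).ncard = (agreeSet sat (↑Γ) w v).ncard ∧ pre u v)

/-- `⊑_w^Γ`: the maximal-superset relation. -/
def msRel {W F : Type*} (sat : W → F → Prop) (Γ : Set F)
    (pre : W → W → Prop) (w : W) (u v : W) : Prop :=
  agreeSet sat Γ w v ⊂ agreeSet sat Γ w u ∨
    (agreeSet sat Γ w v = agreeSet sat Γ w u ∧ pre u v)

/-!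
A world of `[w]_Γ` agrees with `w` on all of `Γ`, the largest possible count, so any world that is
`⪯_w^Γ`-below it agrees with `w` on all of `Γ` as well and lies in `[w]_Γ`; on `[w]_Γ` both
`⪯_w^Γ` and `⊴_w^Γ` reduce to `⪯_w`. Hence every `⊴_w^Γ`-minimal `φ`-world is `⪯_w^Γ`-minimal.
-/

theorem condMinOn_subset_condMinOn {W : Type*} {r r' : W → W → Prop} {D D' : Set W}
    (hD : D' ⊆ D) (hstrict : ∀ u ∈ D, ∀ v ∈ D', r u v → ¬ r v u → u ∈ D' ∧ r' u v ∧ ¬ r' v u)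
    (S : Set W) : condMinOn r' D' S ⊆ condMinOn r D S := by
  rintro v ⟨⟨hvS, hvD'⟩, hvmin⟩
  refine ⟨⟨hvS, hD hvD'⟩, ?_⟩
  rintro u ⟨huS, huD⟩ ⟨huv, hvu⟩
  obtain ⟨huD', huv', hvu'⟩ := hstrict u huD v hvD' huv hvu
  exact hvmin u ⟨huS, huD'⟩ ⟨huv', hvu'⟩

section Agreement

variable {W F : Type*} (sat : W → F → Prop) (w u : W)

theorem agreeSet_subset (Γ : Set F) : agreeSet sat Γ w u ⊆ Γ :=
  sep_subset _ _

theorem agreeSet_eq_self_iff (Γ : Set F) :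
    agreeSet sat Γ w u = Γ ↔ ∀ γ ∈ Γ, (sat u γ ↔ sat w γ) :=
  sep_eq_self_iff_mem_true

theorem ncard_agreeSet_le_card (Γ : Finset F) : (agreeSet sat ↑Γ w u).ncard ≤ Γ.card := by
  simpa using ncard_le_ncard (agreeSet_subset sat w u ↑Γ)

theorem ncard_agreeSet_eq_card_iff (Γ : Finset F) :
    (agreeSet sat ↑Γ w u).ncard = Γ.card ↔ ∀ γ ∈ (Γ : Set F), (sat u γ ↔ sat w γ) := by
  rw [← agreeSet_eq_self_iff, ← ncard_coe_finset]
  refine ⟨fun h => eq_of_subset_of_ncard_le (agreeSet_subset sat w u ↑Γ) h.ge Γ.finite_toSet,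
    fun h => by rw [h]⟩

end Agreement

section NaiveCounting

variable {W F : Type*} (sat : W → F → Prop) (Γ : Finset F) (Ww : Set W) (pre : W → W → Prop)
  (w : W) {u v : W}

theorem ncard_agreeSet_of_mem_cpCls (hv : v ∈ cpCls sat ↑Γ Ww w) :
    (agreeSet sat ↑Γ w v).ncard = Γ.card :=
  (ncard_agreeSet_eq_card_iff sat w v Γ).2 hv.2

theorem mem_cpCls_of_ncRel (hu : u ∈ Ww) (hv : v ∈ cpCls sat ↑Γ Ww w)
    (huv : ncRel sat Γ pre w u v) : u ∈ cpCls sat ↑Γ Ww w := by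
  have hle := ncard_agreeSet_le_card sat w u Γ
  rw [ncRel, ncard_agreeSet_of_mem_cpCls sat Γ Ww w hv] at huv
  refine ⟨hu, (ncard_agreeSet_eq_card_iff sat w u Γ).1 ?_⟩
  omega

theorem ncRel_iff_of_mem_cpCls (hu : u ∈ cpCls sat ↑Γ Ww w) (hv : v ∈ cpCls sat ↑Γ Ww w) :
    ncRel sat Γ pre w u v ↔ pre u v := by
  simp [ncRel, ncard_agreeSet_of_mem_cpCls sat Γ Ww w hu, ncard_agreeSet_of_mem_cpCls sat Γ Ww w hv]

theorem cpRel_strict_of_ncRel_strict (hu : u ∈ Ww) (hv : v ∈ cpCls sat ↑Γ Ww w)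
    (huv : ncRel sat Γ pre w u v) (hvu : ¬ ncRel sat Γ pre w v u) :
    u ∈ cpCls sat ↑Γ Ww w ∧ cpRel sat ↑Γ Ww pre w u v ∧ ¬ cpRel sat ↑Γ Ww pre w v u := by
  have hu' := mem_cpCls_of_ncRel sat Γ Ww pre w hu hv huv
  rw [ncRel_iff_of_mem_cpCls sat Γ Ww pre w hu' hv] at huv
  rw [ncRel_iff_of_mem_cpCls sat Γ Ww pre w hv hu'] at hvu
  exact ⟨hu', ⟨hu', hv, huv⟩, fun h => hvu h.2.2⟩

end NaiveCounting

theorem nc_implies_cp {W F : Type*} (sat : W → F → Prop) (Γ : Finset F)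
    (Ww : Set W) (pre : W → W → Prop) (w : W) (P Q : Set W)
    (h : condMinOn (ncRel sat Γ pre w) Ww P ⊆ Q) :
    condMinOn (cpRel sat (↑Γ) Ww pre w) (cpCls sat (↑Γ) Ww w) P ⊆ Q :=
  (condMinOn_subset_condMinOn (sep_subset _ _)
    (fun _ hu _ hv => cpRel_strict_of_ncRel_strict sat Γ Ww pre w hu hv) P).trans h
end

section
/- NC semantic reduction to comparative possibility: w satisfies [φ,Γ]ψ under NC semantics iff w satisfies ◇φ → (φ∧ψ) ≺^Γ (φ∧¬ψ), where w ⊨ α ⪯^Γ β iff for every u ∈ W_w there is v ∈ W_w such that if u ⊨ β then v ⊨ α and v ⪯_w^Γ u, and α ≺^Γ β := ¬(β ⪯^Γ α). -/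
open Set

/-- Minimal elements of `S` within domain `D` w.r.t. the strict part of `r`. -/
def prefMinOn {W : Type*} (r : W → W → Prop) (D S : Set W) : Set W :=
  {v | v ∈ S ∩ D ∧ ∀ u ∈ S ∩ D, ¬ (r u v ∧ ¬ r v u)}

/-! The naive-counting order combines lexicographically "agrees with `w` on more formulas of
`Γ`" with `pre`; as `Γ` is finite, it inherits transitivity, totality and well-foundedness on
`Ww` from `pre`. For any such order, if all minimal `φ`-worlds satisfy `ψ`, no `φ ∧ ¬ψ`-world
is at least as good as a minimal `φ`-world, since it would be minimal itself; and conversely a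
minimal `φ ∧ ¬ψ`-world is, by totality, at least as good as every `φ ∧ ψ`-world. -/

section Abstract

variable {W : Type*} {r : W → W → Prop} {D P Q : Set W}

theorem mem_prefMinOn_of_rel {m v : W}
    (htrans : ∀ u ∈ D, ∀ v ∈ D, ∀ x ∈ D, r u v → r v x → r u x)
    (hm : m ∈ prefMinOn r D P) (hv : v ∈ P ∩ D) (hvm : r v m) : v ∈ prefMinOn r D P := by
  obtain ⟨⟨-, hmD⟩, hmin⟩ := hm
  refine ⟨hv, fun x hx ⟨hxv, hvx⟩ => hmin x hx ⟨htrans x hx.2 v hv.2 m hmD hxv hvm, ?_⟩⟩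
  exact fun hmx => hvx (htrans v hv.2 m hmD x hx.2 hvm hmx)

theorem prefMinOn_subset_iff
    (htrans : ∀ u ∈ D, ∀ v ∈ D, ∀ x ∈ D, r u v → r v x → r u x)
    (htot : ∀ u ∈ D, ∀ v ∈ D, r u v ∨ r v u)
    (hwf : ∀ S : Set W, S ⊆ D → S.Nonempty → ∃ v ∈ S, ∀ u ∈ S, ¬ (r u v ∧ ¬ r v u)) :
    prefMinOn r D P ⊆ Q ↔
      ((∃ x ∈ D, x ∈ P) → ¬ (∀ u ∈ D, ∃ v ∈ D, (u ∈ P ∩ Q → v ∈ P \ Q ∧ r v u))) := by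
  constructor
  · rintro hsub ⟨x, hxD, hxP⟩ hbeaten
    obtain ⟨m, hmPD, hmmin⟩ := hwf (P ∩ D) inter_subset_right ⟨x, hxP, hxD⟩
    have hm : m ∈ prefMinOn r D P := ⟨hmPD, hmmin⟩
    obtain ⟨v, hvD, hv⟩ := hbeaten m hmPD.2
    obtain ⟨⟨hvP, hvQ⟩, hvm⟩ := hv ⟨hmPD.1, hsub hm⟩
    exact hvQ (hsub (mem_prefMinOn_of_rel htrans hm ⟨hvP, hvD⟩ hvm))
  · intro h m ⟨⟨hmP, hmD⟩, hmmin⟩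
    by_contra hmQ
    refine h ⟨m, hmD, hmP⟩ fun u huD => ⟨m, hmD, fun huPQ => ⟨⟨hmP, hmQ⟩, ?_⟩⟩
    exact (htot u huD m hmD).elim
      (fun hum => not_not.mp fun hmu => hmmin u ⟨huPQ.1, huD⟩ ⟨hum, hmu⟩) id

end Abstract

section NaiveCounting

variable {W F : Type*} (sat : W → F → Prop) (Γ : Finset F) (pre : W → W → Prop) (w : W)

theorem ncard_agreeSet_le (u : W) : (agreeSet sat (↑Γ) w u).ncard ≤ Γ.card := by
  simpa only [Set.ncard_coe_finset] using
    Set.ncard_le_ncard (fun _ hγ => hγ.1 : agreeSet sat (↑Γ) w u ⊆ ↑Γ) Γ.finite_toSet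

theorem exists_forall_ncard_agreeSet_le {S : Set W} (hS : S.Nonempty) :
    ∃ v ∈ S, ∀ u ∈ S, (agreeSet sat (↑Γ) w u).ncard ≤ (agreeSet sat (↑Γ) w v).ncard := by
  have hbdd : BddAbove ((fun u => (agreeSet sat (↑Γ) w u).ncard) '' S) := by
    refine ⟨Γ.card, ?_⟩
    rintro _ ⟨u, -, rfl⟩
    exact ncard_agreeSet_le sat Γ w u
  obtain ⟨v, hv, hvsup⟩ := Nat.sSup_mem (hS.image _) hbdd
  exact ⟨v, hv, fun u hu => (le_csSup hbdd (mem_image_of_mem _ hu)).trans_eq hvsup.symm⟩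

variable {sat Γ pre w} {Ww : Set W}

theorem ncRel_trans (htrans : ∀ u ∈ Ww, ∀ v ∈ Ww, ∀ x ∈ Ww, pre u v → pre v x → pre u x) :
    ∀ u ∈ Ww, ∀ v ∈ Ww, ∀ x ∈ Ww,
      ncRel sat Γ pre w u v → ncRel sat Γ pre w v x → ncRel sat Γ pre w u x := by
  rintro u hu v hv x hx (huv | ⟨huv, hpuv⟩) (hvx | ⟨hvx, hpvx⟩)
  · exact Or.inl (hvx.trans huv)
  · exact Or.inl (hvx ▸ huv)
  · exact Or.inl (huv ▸ hvx)
  · exact Or.inr ⟨huv.trans hvx, htrans u hu v hv x hx hpuv hpvx⟩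

theorem ncRel_total (htot : ∀ u ∈ Ww, ∀ v ∈ Ww, pre u v ∨ pre v u) :
    ∀ u ∈ Ww, ∀ v ∈ Ww, ncRel sat Γ pre w u v ∨ ncRel sat Γ pre w v u := by
  intro u hu v hv
  rcases lt_trichotomy (agreeSet sat (↑Γ) w u).ncard (agreeSet sat (↑Γ) w v).ncard with h | h | h
  · exact Or.inr (Or.inl h)
  · exact (htot u hu v hv).imp (fun hp => Or.inr ⟨h, hp⟩) (fun hp => Or.inr ⟨h.symm, hp⟩)
  · exact Or.inl (Or.inl h)

theorem exists_ncRel_minimal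
    (hwf : ∀ S : Set W, S ⊆ Ww → S.Nonempty → ∃ v ∈ S, ∀ u ∈ S, ¬ (pre u v ∧ ¬ pre v u)) :
    ∀ S : Set W, S ⊆ Ww → S.Nonempty →
      ∃ v ∈ S, ∀ u ∈ S, ¬ (ncRel sat Γ pre w u v ∧ ¬ ncRel sat Γ pre w v u) := by
  intro S hSW hS
  obtain ⟨v₀, hv₀, hv₀max⟩ := exists_forall_ncard_agreeSet_le sat Γ w hS
  obtain ⟨v, ⟨hvS, hvcount⟩, hvmin⟩ :=
    hwf {v ∈ S | (agreeSet sat (↑Γ) w v).ncard = (agreeSet sat (↑Γ) w v₀).ncard}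
      (fun x hx => hSW hx.1) ⟨v₀, hv₀, rfl⟩
  refine ⟨v, hvS, ?_⟩
  rintro u huS ⟨hcount | ⟨hcount, hpuv⟩, hvu⟩
  · exact absurd (hv₀max u huS) (hvcount ▸ hcount).not_ge
  · exact hvmin u ⟨huS, hcount.trans hvcount⟩ ⟨hpuv, fun hpvu => hvu (Or.inr ⟨hcount.symm, hpvu⟩)⟩

end NaiveCounting

theorem nc_reduction_comparative_possibility_general {W F : Type*} (sat : W → F → Prop)
    (Γ : Finset F) (Ww : Set W) (pre : W → W → Prop) (w : W) (P Q : Set W)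
    (htrans : ∀ u ∈ Ww, ∀ v ∈ Ww, ∀ x ∈ Ww, pre u v → pre v x → pre u x)
    (htot : ∀ u ∈ Ww, ∀ v ∈ Ww, pre u v ∨ pre v u)
    (hwf : ∀ S : Set W, S ⊆ Ww → S.Nonempty →
      ∃ v ∈ S, ∀ u ∈ S, ¬ (pre u v ∧ ¬ pre v u)) :
    prefMinOn (ncRel sat Γ pre w) Ww P ⊆ Q ↔
      ((∃ x ∈ Ww, x ∈ P) →
        ¬ (∀ u ∈ Ww, ∃ v ∈ Ww,
            (u ∈ P ∩ Q → v ∈ P \ Q ∧ ncRel sat Γ pre w v u))) :=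
  prefMinOn_subset_iff (ncRel_trans htrans) (ncRel_total htot) (exists_ncRel_minimal hwf)

theorem nc_reduction_comparative_possibility {W F : Type*} (sat : W → F → Prop)
    (Γ : Finset F) (Ww : Set W) (pre : W → W → Prop) (w : W) (P Q : Set W)
    (hrefl : ∀ u ∈ Ww, pre u u)
    (htrans : ∀ u ∈ Ww, ∀ v ∈ Ww, ∀ x ∈ Ww, pre u v → pre v x → pre u x)
    (htot : ∀ u ∈ Ww, ∀ v ∈ Ww, pre u v ∨ pre v u)
    (hwf : ∀ S : Set W, S ⊆ Ww → S.Nonempty →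
      ∃ v ∈ S, ∀ u ∈ S, ¬ (pre u v ∧ ¬ pre v u)) :
    prefMinOn (ncRel sat Γ pre w) Ww P ⊆ Q ↔
      ((∃ x ∈ Ww, x ∈ P) →
        ¬ (∀ u ∈ Ww, ∃ v ∈ Ww,
            (u ∈ P ∩ Q → v ∈ P \ Q ∧ ncRel sat Γ pre w v u))) :=
  nc_reduction_comparative_possibility_general sat Γ Ww pre w P Q htrans htot hwf
end
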